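/- Let c > 0, and let p, q, r, s, f₂, f₃, f₄ be real numbers with q > 0, s > 0, rq − ps > 0, and m := rq − ps + s − q > 0 (strict convexity of the quadrilateral with vertices (0,0), (1,0), (r,s), (p,q)). Suppose the anisotropic Delaunay (empty metric-weighted circumcircle) criterion holds: p·s·(1−p) − c²q²s + q·(c²s² + r² − r) ≥ 0. Then the roughness difference D := (s/2)·(c·f₂² + (f₃ − r·f₂)²/(c·s²)) + ((rq−ps)/2)·(c·(q·f₃ − s·f₄)²/(rq−ps)² + (r·f₄ − p·f₃)²/(c·(rq−ps)²)) − (q/2)·(c·f₂² + (f₄ − p·f₂)²/(c·q²)) − (m/2)·(c·(q·(f₃−f₂) − s·(f₄−f₂))²/m² + ((r−1)·(f₄−f₂) − (p−1)·(f₃−f₂))²/(c·m²)) satisfies D ≥ 0. That is, for every choice of interpolation values, the anisotropic Delaunay triangulation of the convex quadrilateral yields a roughness no larger than the alternative triangulation. -/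

import Mathlib

/-- The roughness difference `D` between the triangulation `𝕋* = {(u₁',u₂',u₃'),
(u₁',u₃',u₄')}` and the triangulation `𝕋 = {(u₁',u₂',u₄'), (u₂',u₃',u₄')}` of the
convex quadrilateral `u₁' = (0,0)`, `u₂' = (1,0)`, `u₃' = (r,s)`, `u₄' = (p,q)`, for
interpolation values `0, f₂, f₃, f₄` and characteristic speed `c`. -/
noncomputable def roughnessDiff (c p q r s f₂ f₃ f₄ : ℝ) : ℝ :=
  (s / 2) * (c * f₂ ^ 2 + (f₃ - r * f₂) ^ 2 / (c * s ^ 2)) +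
    ((r * q - p * s) / 2) *
      (c * (q * f₃ - s * f₄) ^ 2 / (r * q - p * s) ^ 2 +
        (r * f₄ - p * f₃) ^ 2 / (c * (r * q - p * s) ^ 2)) -
    (q / 2) * (c * f₂ ^ 2 + (f₄ - p * f₂) ^ 2 / (c * q ^ 2)) -
    ((r * q - p * s + s - q) / 2) *
      (c * (q * (f₃ - f₂) - s * (f₄ - f₂)) ^ 2 / (r * q - p * s + s - q) ^ 2 +
        ((r - 1) * (f₄ - f₂) - (p - 1) * (f₃ - f₂)) ^ 2 /
          (c * (r * q - p * s + s - q) ^ 2))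

/-!
Both interpolants share their values on the boundary of the quadrilateral, so by Green's
formula the cross terms with a global linear function are the same for both, and `D` is
unchanged when a linear function is added to the data. Hence `D` depends only on the
coplanarity defect `q f₃ − s f₄ + (ps − rq) f₂ = q (f₃ − g(u₃'))`, `g` the linear interpolant
on `(u₁', u₂', u₄')`, and is a multiple of its square; the factor is the Delaunay criterion
divided by `2 c s q (rq − ps) m`.
-/

theorem roughnessDiff_eq {c p q r s f₂ f₃ f₄ : ℝ} (hc : c ≠ 0) (hq : q ≠ 0) (hs : s ≠ 0)
    (hrqps : r * q - p * s ≠ 0) (hm : r * q - p * s + s - q ≠ 0) :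
    roughnessDiff c p q r s f₂ f₃ f₄ =
      (p * s * (1 - p) - c ^ 2 * q ^ 2 * s + q * (c ^ 2 * s ^ 2 + r ^ 2 - r)) *
          (q * f₃ - s * f₄ + (p * s - r * q) * f₂) ^ 2 /
        (2 * c * s * q * (r * q - p * s) * (r * q - p * s + s - q)) := by
  unfold roughnessDiff
  -- name the two areas so that `field_simp` sees them as nonzero atoms
  generalize hM : r * q - p * s + s - q = m at hm ⊢
  generalize hA : r * q - p * s = a at hrqps ⊢
  field_simp
  subst hM hA
  ring

/-- If the anisotropic Delaunay (empty metric-weighted circumcircle) criterion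
`ps(1−p) − c²q²s + q(c²s² + r² − r) ≥ 0` holds on the strictly convex quadrilateral,
then `D ≥ 0`: the anisotropic Delaunay triangulation yields a roughness no larger than
the alternative triangulation, for every choice of interpolation values. -/
theorem anisotropic_Delaunay_minimizes_roughness (c p q r s f₂ f₃ f₄ : ℝ) (hc : 0 < c)
    (hq : 0 < q) (hs : 0 < s) (hrqps : 0 < r * q - p * s)
    (hm : 0 < r * q - p * s + s - q)
    (hDel : 0 ≤ p * s * (1 - p) - c ^ 2 * q ^ 2 * s + q * (c ^ 2 * s ^ 2 + r ^ 2 - r)) :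
    0 ≤ roughnessDiff c p q r s f₂ f₃ f₄ := by
  have hden : 0 < 2 * c * s * q * (r * q - p * s) * (r * q - p * s + s - q) :=
    mul_pos (mul_pos (by positivity) hrqps) hm
  rw [roughnessDiff_eq hc.ne' hq.ne' hs.ne' hrqps.ne' hm.ne']
  exact div_nonneg (mul_nonneg hDel (sq_nonneg _)) hden.le
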